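/- For every positive integer n, the joint distribution of descents and major index over involutions is symmetric: for all i, j, the number of involutions σ ∈ I_n with d(σ) = i and maj(σ) = j equals the number of involutions σ ∈ I_n with d(σ) = n−1−i and maj(σ) = C(n,2) − j. -/

import Mathlib

noncomputable section
open Finset

/-- The set of involutions in the symmetric group on `Fin n`. -/
def Invols (n : ℕ) : Finset (Equiv.Perm (Fin n)) :=
  Finset.univ.filter (fun σ => σ * σ = 1)

/-- The set of fixed-point-free involutions in the symmetric group on `Fin n`. -/
def FPFInvols (n : ℕ) : Finset (Equiv.Perm (Fin n)) :=
  Finset.univ.filter (fun σ => σ * σ = 1 ∧ ∀ i, σ i ≠ i)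

/-- `σ` viewed as a function on one-based positions `1,…,n` (via zero-based `Fin n`),
returning one-based values; positions outside `[0,n)` are fixed. -/
def permFun (n : ℕ) (σ : Equiv.Perm (Fin n)) (i : ℕ) : ℕ :=
  if h : i < n then (σ ⟨i, h⟩ : ℕ) else i

/-- The descent set of `σ`, as a subset of `{1,…,n-1}` (one-based positions):
`i` is a descent iff `σ_i > σ_{i+1}`. -/
def DesSet (n : ℕ) (σ : Equiv.Perm (Fin n)) : Finset ℕ :=
  (Finset.Icc 1 (n - 1)).filter (fun i => permFun n σ i < permFun n σ (i - 1))

/-- The number of descents of `σ`. -/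
def desStat (n : ℕ) (σ : Equiv.Perm (Fin n)) : ℕ := (DesSet n σ).card

/-- The major index of `σ`. -/
def majStat (n : ℕ) (σ : Equiv.Perm (Fin n)) : ℕ := ∑ i ∈ DesSet n σ, i

/-!
Both statistics are functions of the descent set, and complementation `D ↦ {1,…,n-1} \ D` sends
`(d, maj)` to `(n - 1 - d, C(n,2) - maj)`; so it suffices that the descent set of an involution
is equidistributed with its complement. By Möbius inversion over subsets this reduces to: for
every `S`, the involutions with `Des σ ⊆ S` (increasing on each block of the composition cut at
`S`) are as many as those with `{1,…,n-1} \ S ⊆ Des σ` (decreasing on each block).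

For the bijection, split each block into cells according to the block containing the image.
With `ρ` reversing every block and `κ` reversing every cell, send `σ` to `ρ σ κ ρ`. An involution
`σ` that is monotone on blocks maps cells onto cells monotonically, hence commutes with `κ`, so
the image is again an involution; and `ρ` carries the cells of `σ` onto those of its image, which
makes the map its own inverse.
-/

namespace Finset

section Fibers

variable {α β γ γ' : Type*} [Fintype α] [Fintype β] [DecidableEq β] [DecidableEq γ]
  [DecidableEq γ'] {c : α → γ}

lemma image_fiber_eq_fiber {f : α → β} (hf : Function.Surjective f) {c' : β → γ'}
    (hc : ∀ x y, c' (f x) = c' (f y) ↔ c x = c y) (x : α) :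
    ({y | c y = c x} : Finset α).image f = ({z | c' z = c' (f x)} : Finset β) := by
  ext z
  obtain ⟨y, rfl⟩ := hf z
  simp only [mem_image, mem_filter_univ, hc]
  exact ⟨fun ⟨w, hw, hwy⟩ => by rw [← hw, ← hc, hwy], fun h => ⟨y, h, rfl⟩⟩

end Fibers

section Reflect

variable {α β : Type*} [LinearOrder α] [LinearOrder β] {s : Finset α} {t : Finset β} {x y : α}

/-- The order-reversing involution of `s`, extended by the identity outside `s`. -/
def reflect (s : Finset α) (x : α) : α :=
  if hx : x ∈ s then s.orderEmbOfFin rfl ((s.orderIsoOfFin rfl).symm ⟨x, hx⟩).rev else x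

lemma reflect_orderEmbOfFin {k : ℕ} (h : #s = k) (i : Fin k) :
    s.reflect (s.orderEmbOfFin h i) = s.orderEmbOfFin h i.rev := by
  subst h
  have hi : (⟨s.orderEmbOfFin rfl i, orderEmbOfFin_mem s rfl i⟩ : s) = s.orderIsoOfFin rfl i :=
    Subtype.ext (coe_orderIsoOfFin_apply s rfl i).symm
  rw [reflect, dif_pos (orderEmbOfFin_mem s rfl i), hi, OrderIso.symm_apply_apply]

lemma exists_orderEmbOfFin_eq (hx : x ∈ s) : ∃ i, s.orderEmbOfFin rfl i = x := by
  rw [← Set.mem_range, range_orderEmbOfFin]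
  exact hx

lemma reflect_of_notMem (hx : x ∉ s) : s.reflect x = x := dif_neg hx

lemma reflect_mem (hx : x ∈ s) : s.reflect x ∈ s := by
  obtain ⟨i, rfl⟩ := exists_orderEmbOfFin_eq hx
  rw [reflect_orderEmbOfFin]
  exact orderEmbOfFin_mem s rfl _

lemma reflect_reflect (x : α) : s.reflect (s.reflect x) = x := by
  by_cases hx : x ∈ s
  · obtain ⟨i, rfl⟩ := exists_orderEmbOfFin_eq hx
    rw [reflect_orderEmbOfFin, reflect_orderEmbOfFin, Fin.rev_rev]
  · rw [reflect_of_notMem hx, reflect_of_notMem hx]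

lemma reflect_lt_reflect (hx : x ∈ s) (hy : y ∈ s) (hxy : x < y) :
    s.reflect y < s.reflect x := by
  obtain ⟨i, rfl⟩ := exists_orderEmbOfFin_eq hx
  obtain ⟨j, rfl⟩ := exists_orderEmbOfFin_eq hy
  rw [reflect_orderEmbOfFin, reflect_orderEmbOfFin, OrderEmbedding.lt_iff_lt, Fin.rev_lt_rev]
  exact (OrderEmbedding.lt_iff_lt _).mp hxy

lemma apply_reflect_of_strictMonoOn {f : α → β} (hf : StrictMonoOn f s) (hst : s.image f = t)
    (hx : x ∈ s) : f (s.reflect x) = t.reflect (f x) := by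
  have hcard : #t = #s := by rw [← hst, card_image_of_injOn hf.injOn]
  have key : f ∘ s.orderEmbOfFin rfl = t.orderEmbOfFin hcard :=
    orderEmbOfFin_unique hcard (fun i => hst ▸ mem_image_of_mem f (orderEmbOfFin_mem s rfl i))
      fun i j hij => hf (orderEmbOfFin_mem s rfl i) (orderEmbOfFin_mem s rfl j)
        ((s.orderEmbOfFin rfl).strictMono hij)
  obtain ⟨i, rfl⟩ := exists_orderEmbOfFin_eq hx
  rw [reflect_orderEmbOfFin, ← Function.comp_apply (f := f), key, ← Function.comp_apply (f := f),
    key, reflect_orderEmbOfFin]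

lemma apply_reflect_of_strictAntiOn {f : α → β} (hf : StrictAntiOn f s) (hst : s.image f = t)
    (hx : x ∈ s) : f (s.reflect x) = t.reflect (f x) := by
  have hcard : #t = #s := by rw [← hst, card_image_of_injOn hf.injOn]
  have key : f ∘ s.orderEmbOfFin rfl ∘ Fin.rev = t.orderEmbOfFin hcard :=
    orderEmbOfFin_unique hcard (fun i => hst ▸ mem_image_of_mem f (orderEmbOfFin_mem s rfl _))
      fun i j hij => hf (orderEmbOfFin_mem s rfl _) (orderEmbOfFin_mem s rfl _)
        ((s.orderEmbOfFin rfl).strictMono (Fin.rev_lt_rev.mpr hij))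
  obtain ⟨i, rfl⟩ := exists_orderEmbOfFin_eq hx
  have hi := congrFun key i
  have hri := congrFun key i.rev
  simp only [Function.comp_apply, Fin.rev_rev] at hi hri
  rw [reflect_orderEmbOfFin, hi, hri, reflect_orderEmbOfFin, Fin.rev_rev]

lemma apply_reflect_fiber {γ : Type*} [Fintype α] [DecidableEq γ] (c : α → γ) (x : α) :
    c (({y | c y = c x} : Finset α).reflect x) = c x := by
  simpa using reflect_mem (s := ({y | c y = c x} : Finset α)) (by simp)

end Reflect

end Finset

section FiberwiseMonotone

variable {α γ δ : Type*} [Preorder δ]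

def StrictMonoOnFibers [Preorder α] (c : α → γ) (f : α → δ) : Prop :=
  ∀ ⦃x y⦄, c x = c y → x < y → f x < f y

def StrictAntiOnFibers [Preorder α] (c : α → γ) (f : α → δ) : Prop :=
  ∀ ⦃x y⦄, c x = c y → x < y → f y < f x

lemma strictMonoOnFibers_iff_lt_succ [LinearOrder α] [SuccOrder α] [IsSuccArchimedean α]
    {β : Type*} [PartialOrder β] {b : α → β} {f : α → δ} (hb : Monotone b) :
    StrictMonoOnFibers b f ↔
      ∀ a, ¬IsMax a → b (Order.succ a) = b a → f a < f (Order.succ a) := by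
  refine ⟨fun h a ha hab => h hab.symm (Order.lt_succ_of_not_isMax ha), fun h x y hxy hlt => ?_⟩
  exact strictMonoOn_of_lt_succ (s := b ⁻¹' {b x}) (Set.ordConnected_singleton.preimage_mono hb)
    (fun a ha has hsa => h a ha (hsa.trans has.symm)) rfl hxy.symm hlt

end FiberwiseMonotone

namespace Equiv.Perm

variable {α β γ γ' : Type*} [Fintype α] [LinearOrder α] [Fintype β] [LinearOrder β]
  [DecidableEq γ] [DecidableEq γ']

def reflectFibers (c : α → γ) : Perm α :=
  Function.Involutive.toPerm (fun x => ({y | c y = c x} : Finset α).reflect x) fun x => by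
    simp only [Finset.apply_reflect_fiber, Finset.reflect_reflect]

variable {c : α → γ} {x y : α}

lemma reflectFibers_apply (c : α → γ) (x : α) :
    reflectFibers c x = ({y | c y = c x} : Finset α).reflect x := rfl

lemma apply_reflectFibers (c : α → γ) (x : α) : c (reflectFibers c x) = c x :=
  Finset.apply_reflect_fiber c x

@[simp]
lemma reflectFibers_reflectFibers (c : α → γ) (x : α) :
    reflectFibers c (reflectFibers c x) = x := by
  simp only [reflectFibers_apply, Finset.apply_reflect_fiber, Finset.reflect_reflect]

lemma reflectFibers_lt_reflectFibers (hxy : c x = c y) (h : x < y) :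
    reflectFibers c y < reflectFibers c x := by
  rw [reflectFibers_apply, reflectFibers_apply, hxy]
  exact Finset.reflect_lt_reflect (by simp [hxy]) (by simp) h

lemma apply_reflectFibers_of_strictMonoOnFibers {f : α → β} (hf : Function.Surjective f)
    {c' : β → γ'} (hc : ∀ x y, c' (f x) = c' (f y) ↔ c x = c y) (hmono : StrictMonoOnFibers c f)
    (x : α) : f (reflectFibers c x) = reflectFibers c' (f x) :=
  Finset.apply_reflect_of_strictMonoOn (fun _ hy _ hz h => hmono (by simp_all) h)
    (Finset.image_fiber_eq_fiber hf hc x) (by simp)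

lemma apply_reflectFibers_of_strictAntiOnFibers {f : α → β} (hf : Function.Surjective f)
    {c' : β → γ'} (hc : ∀ x y, c' (f x) = c' (f y) ↔ c x = c y) (hanti : StrictAntiOnFibers c f)
    (x : α) : f (reflectFibers c x) = reflectFibers c' (f x) :=
  Finset.apply_reflect_of_strictAntiOn (fun _ hy _ hz h => hanti (by simp_all) h)
    (Finset.image_fiber_eq_fiber hf hc x) (by simp)

section FlipBlocks

variable {β : Type*} [DecidableEq β] (b : α → β) (σ : Perm α)

/-- Reverses every cell `{x | b x = I ∧ b (σ x) = J}`. -/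
def reflectCells : Perm α := reflectFibers fun x => (b x, b (σ x))

def flipBlocks : Perm α := reflectFibers b * σ * reflectCells b σ * reflectFibers b

lemma apply_reflectCells (x : α) :
    b (reflectCells b σ x) = b x ∧ b (σ (reflectCells b σ x)) = b (σ x) :=
  Prod.ext_iff.mp (apply_reflectFibers (fun x => (b x, b (σ x))) x)

variable {b σ}

lemma reflectCells_flipBlocks :
    reflectCells b (flipBlocks b σ) = reflectFibers b * reflectCells b σ * reflectFibers b := by
  have hcell (x : α) : (b (reflectFibers b x), b (flipBlocks b σ (reflectFibers b x))) =
      (b x, b (σ x)) := by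
    simp [flipBlocks, apply_reflectFibers, (apply_reflectCells b σ x).2]
  have hanti : StrictAntiOnFibers (fun x => (b x, b (σ x))) (reflectFibers b) :=
    fun x y hxy => reflectFibers_lt_reflectFibers (Prod.ext_iff.mp hxy).1
  ext x
  have := apply_reflectFibers_of_strictAntiOnFibers (reflectFibers b).surjective
    (c' := fun x => (b x, b (flipBlocks b σ x))) (fun x y => by rw [hcell, hcell]) hanti
    (reflectFibers b x)
  simp only [reflectFibers_reflectFibers] at this
  simp [reflectCells, this]

lemma flipBlocks_flipBlocks : flipBlocks b (flipBlocks b σ) = σ := by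
  rw [flipBlocks, reflectCells_flipBlocks]
  ext x
  simp [flipBlocks, reflectCells]

lemma commute_reflectCells (hσ : σ * σ = 1)
    (h : StrictMonoOnFibers b σ ∨ StrictAntiOnFibers b σ) : Commute σ (reflectCells b σ) := by
  have hσσ (x : α) : σ (σ x) = x := by rw [← Perm.mul_apply, hσ, Perm.one_apply]
  have hc (x y : α) : (b (σ x), b (σ (σ x))) = (b (σ y), b (σ (σ y))) ↔
      (b x, b (σ x)) = (b y, b (σ y)) := by
    simp only [hσσ, Prod.ext_iff]
    tauto
  ext x
  change σ (reflectCells b σ x) = reflectCells b σ (σ x)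
  rcases h with h | h
  · exact apply_reflectFibers_of_strictMonoOnFibers σ.surjective hc
      (fun x y hxy => h (Prod.ext_iff.mp hxy).1) x
  · exact apply_reflectFibers_of_strictAntiOnFibers σ.surjective hc
      (fun x y hxy => h (Prod.ext_iff.mp hxy).1) x

lemma flipBlocks_mul_self (hσ : σ * σ = 1) (hcomm : Commute σ (reflectCells b σ)) :
    flipBlocks b σ * flipBlocks b σ = 1 := by
  have hσσ (x : α) : σ (σ x) = x := by rw [← Perm.mul_apply, hσ, Perm.one_apply]
  have hκκ (x : α) : reflectCells b σ (reflectCells b σ x) = x := reflectFibers_reflectFibers _ x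
  have hσκ (x : α) : σ (reflectCells b σ x) = reflectCells b σ (σ x) := Perm.ext_iff.mp hcomm.eq x
  ext x
  simp [flipBlocks, hσκ, hσσ, hκκ]

end FlipBlocks

section Monotone

variable {β : Type*} [PartialOrder β] [DecidableEq β] {b : α → β} {σ : Perm α}

lemma reflectFibers_lt_reflectFibers_of_lt (hb : Monotone b) {x y : α} (h : b x < b y) :
    reflectFibers b x < reflectFibers b y :=
  hb.reflect_lt (by rwa [apply_reflectFibers b, apply_reflectFibers b])

lemma strictAntiOnFibers_flipBlocks (hb : Monotone b) (h : StrictMonoOnFibers b σ) :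
    StrictAntiOnFibers b (flipBlocks b σ) := by
  intro x y hxy hlt
  set a := reflectFibers b y
  set a' := reflectFibers b x
  have haa' : a < a' := reflectFibers_lt_reflectFibers hxy hlt
  have hba : b a = b a' := by simp only [a, a', apply_reflectFibers, hxy]
  change reflectFibers b (σ (reflectCells b σ a)) < reflectFibers b (σ (reflectCells b σ a'))
  rcases (hb (h hba haa').le).lt_or_eq with hlt' | heq
  · apply reflectFibers_lt_reflectFibers_of_lt hb
    rwa [(apply_reflectCells b σ a).2, (apply_reflectCells b σ a').2]
  · have hκ : reflectCells b σ a' < reflectCells b σ a :=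
      reflectFibers_lt_reflectFibers (Prod.ext hba heq) haa'
    refine reflectFibers_lt_reflectFibers ?_ (h ?_ hκ)
    · rw [(apply_reflectCells b σ a).2, (apply_reflectCells b σ a').2, heq]
    · rw [(apply_reflectCells b σ a).1, (apply_reflectCells b σ a').1, hba]

lemma strictMonoOnFibers_flipBlocks (hb : Monotone b) (h : StrictAntiOnFibers b σ) :
    StrictMonoOnFibers b (flipBlocks b σ) := by
  intro x y hxy hlt
  set a := reflectFibers b y
  set a' := reflectFibers b x
  have haa' : a < a' := reflectFibers_lt_reflectFibers hxy hlt
  have hba : b a = b a' := by simp only [a, a', apply_reflectFibers, hxy]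
  change reflectFibers b (σ (reflectCells b σ a')) < reflectFibers b (σ (reflectCells b σ a))
  rcases (hb (h hba haa').le).lt_or_eq with hlt' | heq
  · apply reflectFibers_lt_reflectFibers_of_lt hb
    rwa [(apply_reflectCells b σ a).2, (apply_reflectCells b σ a').2]
  · have hκ : reflectCells b σ a' < reflectCells b σ a :=
      reflectFibers_lt_reflectFibers (Prod.ext hba heq.symm) haa'
    refine reflectFibers_lt_reflectFibers ?_ (h ?_ hκ)
    · rw [(apply_reflectCells b σ a).2, (apply_reflectCells b σ a').2, heq]
    · rw [(apply_reflectCells b σ a).1, (apply_reflectCells b σ a').1, hba]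

open scoped Classical in
theorem card_involutions_strictMonoOnFibers_eq_strictAntiOnFibers (hb : Monotone b) :
    #{σ : Perm α | σ * σ = 1 ∧ StrictMonoOnFibers b σ} =
      #{σ : Perm α | σ * σ = 1 ∧ StrictAntiOnFibers b σ} := by
  refine card_nbij' (flipBlocks b) (flipBlocks b) (fun σ hσ => ?_) (fun σ hσ => ?_)
    (fun σ _ => flipBlocks_flipBlocks) (fun σ _ => flipBlocks_flipBlocks)
  · simp only [coe_filter, mem_univ, true_and, Set.mem_ofPred_eq] at hσ ⊢
    exact ⟨flipBlocks_mul_self hσ.1 (commute_reflectCells hσ.1 (.inl hσ.2)),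
      strictAntiOnFibers_flipBlocks hb hσ.2⟩
  · simp only [coe_filter, mem_univ, true_and, Set.mem_ofPred_eq] at hσ ⊢
    exact ⟨flipBlocks_mul_self hσ.1 (commute_reflectCells hσ.1 (.inr hσ.2)),
      strictMonoOnFibers_flipBlocks hb hσ.2⟩

end Monotone

end Equiv.Perm

lemma Fin.val_succ_of_not_isMax {n : ℕ} {a : Fin n} (ha : ¬IsMax a) :
    ((Order.succ a : Fin n) : ℕ) = a + 1 :=
  (Nat.covBy_iff_add_one_eq.mp (Fin.covBy_iff.mp (Order.covBy_succ_of_not_isMax ha))).symm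

section Descents

variable {n : ℕ} {S : Finset ℕ} {σ : Equiv.Perm (Fin n)}

/-- Zero-based position `x` lies in block number `#{s ∈ S | s ≤ x}`, so `s ∈ S` cuts between the
one-based positions `s` and `s + 1`, the indexing of `DesSet`. -/
def blockOf (S : Finset ℕ) (x : Fin n) : ℕ := #{s ∈ S | s ≤ (x : ℕ)}

lemma monotone_blockOf (S : Finset ℕ) : Monotone (blockOf (n := n) S) :=
  fun _ _ hxy => card_le_card fun _ hs => by
    simp only [mem_filter] at hs ⊢
    exact ⟨hs.1, hs.2.trans hxy⟩

lemma blockOf_succ_eq_iff {a : Fin n} (ha : ¬IsMax a) :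
    blockOf S (Order.succ a) = blockOf S a ↔ (a : ℕ) + 1 ∉ S := by
  rw [blockOf, blockOf, Fin.val_succ_of_not_isMax ha]
  constructor
  · intro h hS
    refine (card_lt_card ⟨fun s hs => ?_, fun hsub => ?_⟩).ne' h
    · simp only [mem_filter] at hs ⊢
      exact ⟨hs.1, by omega⟩
    · simpa using hsub (mem_filter.mpr ⟨hS, le_rfl⟩)
  · intro hS
    congr 1
    ext s
    simp only [mem_filter]
    exact and_congr_right fun hs =>
      ⟨fun h => Nat.lt_succ_iff.mp (h.lt_of_ne (by rintro rfl; exact hS hs)), Nat.le_succ_of_le⟩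

lemma exists_succ_eq_of_mem_Icc {i : ℕ} (hi : i ∈ Icc 1 (n - 1)) :
    ∃ a : Fin n, ¬IsMax a ∧ (a : ℕ) + 1 = i := by
  rw [mem_Icc] at hi
  exact ⟨⟨i - 1, by omega⟩, not_isMax_iff.mpr ⟨⟨i, by omega⟩, Fin.lt_def.mpr (by simp; omega)⟩,
    by simp; omega⟩

lemma val_add_one_mem_Icc {a : Fin n} (ha : ¬IsMax a) : (a : ℕ) + 1 ∈ Icc 1 (n - 1) := by
  have := (Order.succ a).isLt
  rw [Fin.val_succ_of_not_isMax ha] at this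
  exact mem_Icc.mpr ⟨by omega, by omega⟩

lemma succ_mem_desSet_iff (σ : Equiv.Perm (Fin n)) {a : Fin n} (ha : ¬IsMax a) :
    (a : ℕ) + 1 ∈ DesSet n σ ↔ σ (Order.succ a) < σ a := by
  have hs := Fin.val_succ_of_not_isMax ha
  have hlt : (a : ℕ) + 1 < n := hs ▸ (Order.succ a).isLt
  rw [Fin.ext (hs.trans rfl : _ = ((⟨a + 1, hlt⟩ : Fin n) : ℕ)), DesSet, mem_filter, mem_Icc,
    permFun, permFun, dif_pos hlt, Nat.add_sub_cancel, dif_pos a.isLt, Fin.eta, Fin.lt_def]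
  exact and_iff_right ⟨by omega, by omega⟩

lemma desSet_subset_iff : DesSet n σ ⊆ S ↔ StrictMonoOnFibers (blockOf S) σ := by
  rw [strictMonoOnFibers_iff_lt_succ (monotone_blockOf S)]
  constructor
  · intro h a ha hab
    refine lt_of_le_of_ne (not_lt.mp fun hlt => (blockOf_succ_eq_iff ha).mp hab ?_) ?_
    · exact h ((succ_mem_desSet_iff σ ha).mpr hlt)
    · exact σ.injective.ne (Order.lt_succ_of_not_isMax ha).ne
  · intro h i hi
    obtain ⟨a, ha, rfl⟩ := exists_succ_eq_of_mem_Icc (mem_filter.mp hi).1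
    by_contra hS
    exact (h a ha ((blockOf_succ_eq_iff ha).mpr hS)).asymm ((succ_mem_desSet_iff σ ha).mp hi)

lemma sdiff_desSet_subset_iff :
    Icc 1 (n - 1) \ DesSet n σ ⊆ S ↔ StrictAntiOnFibers (blockOf S) σ := by
  change _ ↔ StrictMonoOnFibers (blockOf S) (OrderDual.toDual ∘ σ)
  rw [strictMonoOnFibers_iff_lt_succ (monotone_blockOf S)]
  constructor
  · intro h a ha hab
    refine (succ_mem_desSet_iff σ ha).mp (not_not.mp fun hD => (blockOf_succ_eq_iff ha).mp hab ?_)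
    exact h (mem_sdiff.mpr ⟨val_add_one_mem_Icc ha, hD⟩)
  · intro h i hi
    rw [mem_sdiff] at hi
    obtain ⟨a, ha, rfl⟩ := exists_succ_eq_of_mem_Icc hi.1
    by_contra hS
    exact hi.2 ((succ_mem_desSet_iff σ ha).mpr (h a ha ((blockOf_succ_eq_iff ha).mpr hS)))

lemma card_invols_desSet_subset_eq (n : ℕ) (S : Finset ℕ) :
    #{σ ∈ Invols n | DesSet n σ ⊆ S} = #{σ ∈ Invols n | Icc 1 (n - 1) \ DesSet n σ ⊆ S} := by
  classical
  simp only [Invols, filter_filter, desSet_subset_iff, sdiff_desSet_subset_iff]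
  exact Equiv.Perm.card_involutions_strictMonoOnFibers_eq_strictAntiOnFibers (monotone_blockOf S)

end Descents

namespace Finset

section Equidistribution

variable {X ι : Type*} [DecidableEq ι] {s : Finset X} {D D' : X → Finset ι}

lemma card_filter_subset_eq_sum_powerset (D : X → Finset ι) (T : Finset ι) :
    #{x ∈ s | D x ⊆ T} = ∑ U ∈ T.powerset, #{x ∈ s | D x = U} := by
  rw [card_eq_sum_card_fiberwise (t := T.powerset)
    fun x hx => mem_powerset.mpr (mem_filter.mp hx).2]
  refine sum_congr rfl fun U hU => ?_
  rw [filter_filter]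
  exact congrArg card (filter_congr fun x _ => ⟨And.right, fun h => ⟨h ▸ mem_powerset.mp hU, h⟩⟩)

lemma card_filter_eq_of_card_filter_subset_eq
    (h : ∀ T, #{x ∈ s | D x ⊆ T} = #{x ∈ s | D' x ⊆ T}) (T : Finset ι) :
    #{x ∈ s | D x = T} = #{x ∈ s | D' x = T} := by
  induction T using Finset.strongInduction with
  | H T ih =>
    have hT := h T
    rw [card_filter_subset_eq_sum_powerset, card_filter_subset_eq_sum_powerset,
      ← add_sum_erase _ _ (mem_powerset_self T), ← add_sum_erase _ _ (mem_powerset_self T),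
      sum_congr rfl fun U hU => ih U ?_] at hT
    · exact Nat.add_right_cancel hT
    · rw [mem_erase, mem_powerset] at hU
      exact hU.2.ssubset_of_ne hU.1

end Equidistribution

lemma card_filter_comp_eq_of_card_fiber_eq {X Y : Type*} [DecidableEq Y] {s : Finset X}
    {D D' : X → Y} (h : ∀ y, #{x ∈ s | D x = y} = #{x ∈ s | D' x = y}) (p : Y → Prop)
    [DecidablePred p] : #{x ∈ s | p (D x)} = #{x ∈ s | p (D' x)} := by
  have hmap : s.val.map D = s.val.map D' := Multiset.ext.mpr fun y => by
    simp_rw [Multiset.count_map, eq_comm (a := y)]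
    exact h y
  have := congrArg (Multiset.countP p) hmap
  rwa [Multiset.countP_map, Multiset.countP_map] at this

lemma sum_Icc_one_sub_one_id (n : ℕ) : ∑ x ∈ Icc 1 (n - 1), x = n.choose 2 := by
  rw [Nat.choose_two_right, ← sum_range_id]
  refine sum_subset (fun x hx => ?_) (fun x hx hx' => ?_)
  · simp only [mem_Icc, mem_range] at hx ⊢
    omega
  · simp only [mem_Icc, mem_range] at hx hx'
    omega

end Finset

theorem involution_joint_descent_major_symmetric (n : ℕ) (hn : 1 ≤ n) (i j : ℤ) :
    ((Invols n).filter (fun σ => (desStat n σ : ℤ) = i ∧ (majStat n σ : ℤ) = j)).card =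
      ((Invols n).filter (fun σ => (desStat n σ : ℤ) = (n : ℤ) - 1 - i ∧
        (majStat n σ : ℤ) = (n.choose 2 : ℤ) - j)).card := by
  have hequi := card_filter_eq_of_card_filter_subset_eq (card_invols_desSet_subset_eq n)
  refine (card_filter_comp_eq_of_card_fiber_eq hequi
    (fun T => (#T : ℤ) = i ∧ ((∑ x ∈ T, x : ℕ) : ℤ) = j)).trans
    (congrArg card (filter_congr fun σ _ => ?_))
  have hD : DesSet n σ ⊆ Icc 1 (n - 1) := filter_subset _ _
  have hcard : #(Icc 1 (n - 1) \ DesSet n σ) + desStat n σ = n - 1 :=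
    (card_sdiff_add_card_eq_card hD).trans (by simp)
  have hsum : ∑ x ∈ Icc 1 (n - 1) \ DesSet n σ, x + majStat n σ = n.choose 2 :=
    (sum_sdiff hD).trans (sum_Icc_one_sub_one_id n)
  omega
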